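/- Let (P_1+P_5)^b be the labelled bipartite graph consisting of one isolated black vertex together with a path on five vertices whose first, third and fifth vertices are black and whose second and fourth vertices are white, and let (P_1+2P_2)^b be the labelled bipartite graph consisting of one isolated black vertex together with two disjoint edges, each joining a black vertex to a white vertex. Let G be a bipartite graph with a bipartition (B, W) into independent sets such that |B| is odd and (P_1+P_5)^b is not a labelled induced subgraph of (B, W, E_G). Let X be the set of vertices of W that are adjacent to fewer than |B|/2 vertices of B, and let G_1 be the graph obtained from G by a bipartite complementation between X and B (replacing every edge with one endpoint in X and the other in B by a non-edge and vice versa). Then (P_1+2P_2)^b is not a labelled induced subgraph of (B, W, E_{G_1}). -/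

import Mathlib

open SimpleGraph

/-- `B` is the black colour class of a black-and-white labelling of `H`:
every edge of `H` joins a vertex of `B` to a vertex outside `B`
(equivalently, `B` and its complement `Bᶜ` are both independent sets,
i.e. `(B, Bᶜ)` is a bipartition of `H` into two possibly empty independent sets). -/
def IsBWLabelling {V : Type*} (H : SimpleGraph V) (B : Set V) : Prop :=
  ∀ ⦃u v : V⦄, H.Adj u v → (u ∈ B ↔ v ∉ B)

/-- `H` with black class `BH` is a labelled induced subgraph of `G` with black class `BG`:
there is an injective map preserving both adjacency and non-adjacency which maps
black vertices to black vertices and white vertices to white vertices. -/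
def LabelledIndSubgraph {VH VG : Type*} (H : SimpleGraph VH) (BH : Set VH)
    (G : SimpleGraph VG) (BG : Set VG) : Prop :=
  ∃ f : VH → VG, Function.Injective f ∧
    (∀ u v : VH, H.Adj u v ↔ G.Adj (f u) (f v)) ∧
    (∀ u : VH, u ∈ BH ↔ f u ∈ BG)

/-- `G` is strongly `H^ℓ`-free, where `BH` is the black class of the labelling `ℓ`:
there is no bipartition `(BG, BGᶜ)` of `G` such that `H^ℓ` is a labelled induced
subgraph of `(BG, BGᶜ, E_G)`. -/
def StronglyFree {VG VH : Type*} (G : SimpleGraph VG) (H : SimpleGraph VH)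
    (BH : Set VH) : Prop :=
  ¬ ∃ BG : Set VG, IsBWLabelling G BG ∧ LabelledIndSubgraph H BH G BG

/-- `G` is weakly `H^ℓ`-free, where `BH` is the black class of the labelling `ℓ`:
it is not the case that `H^ℓ` is a labelled induced subgraph of `(BG, BGᶜ, E_G)`
for every bipartition `(BG, BGᶜ)` of `G`. -/
def WeaklyFree {VG VH : Type*} (G : SimpleGraph VG) (H : SimpleGraph VH)
    (BH : Set VH) : Prop :=
  ¬ ∀ BG : Set VG, IsBWLabelling G BG → LabelledIndSubgraph H BH G BG

/-- `G` is `H`-free: `G` contains no induced subgraph isomorphic to `H`. -/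
def HFree {VG VH : Type*} (G : SimpleGraph VG) (H : SimpleGraph VH) : Prop :=
  ¬ ∃ f : VH → VG, Function.Injective f ∧ ∀ u v : VH, H.Adj u v ↔ G.Adj (f u) (f v)

/-- The graph obtained from `G` by a bipartite complementation between the disjoint
vertex subsets `X` and `Y`: every edge with one endpoint in `X` and the other in `Y`
is replaced by a non-edge and vice versa; all other adjacencies are unchanged. -/
def bipComplementation {V : Type*} (G : SimpleGraph V) (X Y : Set V) :
    SimpleGraph V where
  Adj u v :=
    (((u ∈ X ∧ v ∈ Y) ∨ (v ∈ X ∧ u ∈ Y)) ∧ u ≠ v ∧ ¬ G.Adj u v) ∨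
    (¬ ((u ∈ X ∧ v ∈ Y) ∨ (v ∈ X ∧ u ∈ Y)) ∧ G.Adj u v)
  symm := by
    refine ⟨fun u v h => ?_⟩
    rcases h with ⟨hc, hne, hna⟩ | ⟨hc, ha⟩
    · exact Or.inl ⟨hc.symm, hne.symm, fun h => hna h.symm⟩
    · exact Or.inr ⟨fun h => hc h.symm, ha.symm⟩
  loopless := by
    refine ⟨fun u h => ?_⟩
    rcases h with ⟨_, hne, _⟩ | ⟨_, ha⟩
    · exact hne rfl
    · exact G.irrefl ha

/-- The graph `P_1 + P_5`: an isolated vertex `0` and the path `1-2-3-4-5`.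
In the labelling `(P_1+P_5)^b` the vertices `0, 1, 3, 5` are black and the
vertices `2, 4` are white. -/
def gP1'P5 : SimpleGraph (Fin 6) :=
  SimpleGraph.fromEdgeSet {s(1, 2), s(2, 3), s(3, 4), s(4, 5)}

/-- The graph `P_1 + 2P_2`: an isolated vertex `0` and the two disjoint edges
`12` and `34`. In the labelling `(P_1+2P_2)^b` the vertices `0, 1, 3` are black
and the vertices `2, 4` are white. -/
def gP1'2P2 : SimpleGraph (Fin 5) := SimpleGraph.fromEdgeSet {s(1, 2), s(3, 4)}

/-!
After the complementation every white vertex is adjacent to more than half of `B` (a tie is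
impossible as `|B|` is odd). Hence the two white vertices of an induced `(P_1+2P_2)^b` in `G₁`
have a common black neighbour, which joins its two edges into an induced `(P_1+P_5)^b` in `G₁`.
Complementing any set of white vertices against `B` does not destroy an induced `(P_1+P_5)^b`
(the same six vertices still carry one), so `G` contains `(P_1+P_5)^b`, a contradiction.
-/

namespace Set

theorem inter_nonempty_of_ncard_lt_two_mul_ncard {α : Type*} {s t u : Set α}
    (hs : s ⊆ u) (ht : t ⊆ u) (hu : u.Finite) (hsu : u.ncard < 2 * s.ncard)
    (htu : u.ncard < 2 * t.ncard) : (s ∩ t).Nonempty := by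
  have hunion : (s ∪ t).ncard ≤ u.ncard := ncard_le_ncard (union_subset hs ht) hu
  have hinter := ncard_union_add_ncard_inter s t (hu.subset hs) (hu.subset ht)
  exact nonempty_of_ncard_ne_zero (by omega)

end Set

section LabelledGraphs

variable {VH V : Type*} {H : SimpleGraph VH} {BH : Set VH} {G : SimpleGraph V} {B : Set V}

theorem IsBWLabelling.not_adj_of_mem_iff (hB : IsBWLabelling G B) {u v : V}
    (huv : u ∈ B ↔ v ∈ B) : ¬ G.Adj u v := fun h => by
  have := hB h
  tauto

/-- Injectivity comes for free: `f u = f v` forces `u` and `v` to have the same neighbours. -/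
theorem labelledIndSubgraph_of_forall_mem_notMem_adj_iff (hH : IsBWLabelling H BH)
    (hB : IsBWLabelling G B) (htwin : ∀ u v, (∀ w, H.Adj u w ↔ H.Adj v w) → u = v)
    (f : VH → V) (hcol : ∀ u, u ∈ BH ↔ f u ∈ B)
    (hadj : ∀ u ∈ BH, ∀ v ∉ BH, H.Adj u v ↔ G.Adj (f u) (f v)) :
    LabelledIndSubgraph H BH G B := by
  have hadj' : ∀ u v, H.Adj u v ↔ G.Adj (f u) (f v) := by
    intro u v
    by_cases hu : u ∈ BH <;> by_cases hv : v ∈ BH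
    · exact iff_of_false (hH.not_adj_of_mem_iff (iff_of_true hu hv))
        (hB.not_adj_of_mem_iff (iff_of_true ((hcol u).1 hu) ((hcol v).1 hv)))
    · exact hadj u hu v hv
    · rw [H.adj_comm, G.adj_comm]
      exact hadj v hv u hu
    · exact iff_of_false (hH.not_adj_of_mem_iff (iff_of_false hu hv))
        (hB.not_adj_of_mem_iff (iff_of_false (mt (hcol u).2 hu) (mt (hcol v).2 hv)))
  refine ⟨f, fun u v huv => htwin u v fun w => ?_, hadj', hcol⟩
  rw [hadj', hadj', huv]

end LabelledGraphs

section bipComplementation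

variable {V : Type*} {G : SimpleGraph V} {X Y : Set V}

theorem bipComplementation_adj_iff {w y : V} (hw : w ∉ Y) (hy : y ∈ Y) :
    (bipComplementation G X Y).Adj w y ↔ (G.Adj w y ↔ w ∉ X) := by
  have hne : w ≠ y := fun h => hw (h ▸ hy)
  by_cases hwX : w ∈ X <;> simp [bipComplementation, hw, hy, hwX, hne]

theorem IsBWLabelling.bipComplementation (hB : IsBWLabelling G Y) (hXY : Disjoint X Y) :
    IsBWLabelling (bipComplementation G X Y) Y := by
  rintro u v (⟨⟨hu, hv⟩ | ⟨hv, hu⟩, -⟩ | ⟨-, h⟩)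
  · exact iff_of_false (hXY.notMem_of_mem_left hu) (not_not_intro hv)
  · exact iff_of_true hu (hXY.notMem_of_mem_left hv)
  · exact hB h

end bipComplementation

instance : DecidableRel gP1'P5.Adj := fun u v => by
  unfold gP1'P5
  infer_instance

instance : DecidableRel gP1'2P2.Adj := fun u v => by
  unfold gP1'2P2
  infer_instance

section P1P5

variable {V : Type*} {G : SimpleGraph V} {B : Set V}

theorem isBWLabelling_gP1'P5 : IsBWLabelling gP1'P5 {0, 1, 3, 5} := by
  unfold IsBWLabelling
  decide

theorem eq_of_forall_gP1'P5_adj_iff :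
    ∀ u v : Fin 6, (∀ w, gP1'P5.Adj u w ↔ gP1'P5.Adj v w) → u = v := by
  decide

theorem labelledIndSubgraph_gP1'P5_of_path (hB : IsBWLabelling G B)
    {b₀ b₁ b₃ b₅ w₂ w₄ : V} (hb₀ : b₀ ∈ B) (hb₁ : b₁ ∈ B) (hb₃ : b₃ ∈ B) (hb₅ : b₅ ∈ B)
    (hw₂ : w₂ ∉ B) (hw₄ : w₄ ∉ B)
    (h₂₁ : G.Adj w₂ b₁) (h₂₃ : G.Adj w₂ b₃) (h₄₃ : G.Adj w₄ b₃) (h₄₅ : G.Adj w₄ b₅)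
    (h₂₀ : ¬ G.Adj w₂ b₀) (h₂₅ : ¬ G.Adj w₂ b₅) (h₄₀ : ¬ G.Adj w₄ b₀) (h₄₁ : ¬ G.Adj w₄ b₁) :
    LabelledIndSubgraph gP1'P5 {0, 1, 3, 5} G B := by
  refine labelledIndSubgraph_of_forall_mem_notMem_adj_iff isBWLabelling_gP1'P5 hB
    eq_of_forall_gP1'P5_adj_iff ![b₀, b₁, w₂, b₃, w₄, b₅] (fun u => ?_) (fun u hu v hv => ?_)
  · fin_cases u <;> simp [*]
  · simp only [Set.mem_insert_iff, Set.mem_singleton_iff] at hu hv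
    fin_cases u <;> fin_cases v <;> simp_all [gP1'P5, G.adj_comm]

/-- Flipping one white vertex of the path re-routes the path through the end that vertex was
not adjacent to; flipping both re-routes it through the isolated vertex. -/
theorem labelledIndSubgraph_gP1'P5_of_bipComplementation {X : Set V} (hB : IsBWLabelling G B)
    (h : LabelledIndSubgraph gP1'P5 {0, 1, 3, 5} (bipComplementation G X B) B) :
    LabelledIndSubgraph gP1'P5 {0, 1, 3, 5} G B := by
  obtain ⟨g, -, hadj, hcol⟩ := h
  have hb₀ := (hcol 0).1 (by decide)
  have hb₁ := (hcol 1).1 (by decide)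
  have hb₃ := (hcol 3).1 (by decide)
  have hb₅ := (hcol 5).1 (by decide)
  have hw₂ := mt (hcol 2).2 (by decide)
  have hw₄ := mt (hcol 4).2 (by decide)
  have hflip (i j : Fin 6) (hi : g i ∉ B) (hj : g j ∈ B) :
      G.Adj (g i) (g j) ↔ (gP1'P5.Adj i j ↔ g i ∉ X) := by
    rw [hadj, bipComplementation_adj_iff hi hj]
    tauto
  have hedge (i j : Fin 6) (hi : g i ∉ B) (hj : g j ∈ B) (hij : gP1'P5.Adj i j) :
      G.Adj (g i) (g j) ↔ g i ∉ X := by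
    simpa [hij] using hflip i j hi hj
  have hnon (i j : Fin 6) (hi : g i ∉ B) (hj : g j ∈ B) (hij : ¬ gP1'P5.Adj i j) :
      G.Adj (g i) (g j) ↔ g i ∈ X := by
    simpa [hij] using hflip i j hi hj
  have h₂₁ := hedge 2 1 hw₂ hb₁ (by decide)
  have h₂₃ := hedge 2 3 hw₂ hb₃ (by decide)
  have h₄₃ := hedge 4 3 hw₄ hb₃ (by decide)
  have h₄₅ := hedge 4 5 hw₄ hb₅ (by decide)
  have h₂₀ := hnon 2 0 hw₂ hb₀ (by decide)
  have h₂₅ := hnon 2 5 hw₂ hb₅ (by decide)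
  have h₄₀ := hnon 4 0 hw₄ hb₀ (by decide)
  have h₄₁ := hnon 4 1 hw₄ hb₁ (by decide)
  by_cases hx₂ : g 2 ∈ X <;> by_cases hx₄ : g 4 ∈ X <;>
    simp only [hx₂, hx₄, iff_true, iff_false, not_true_eq_false, not_false_eq_true]
      at h₂₁ h₂₃ h₄₃ h₄₅ h₂₀ h₂₅ h₄₀ h₄₁
  · exact labelledIndSubgraph_gP1'P5_of_path hB hb₃ hb₅ hb₀ hb₁ hw₂ hw₄ h₂₅ h₂₀ h₄₀ h₄₁ h₂₃ h₂₁ h₄₃ h₄₅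
  · exact labelledIndSubgraph_gP1'P5_of_path hB hb₁ hb₀ hb₅ hb₃ hw₂ hw₄ h₂₀ h₂₅ h₄₅ h₄₃ h₂₁ h₂₃ h₄₁ h₄₀
  · exact labelledIndSubgraph_gP1'P5_of_path hB hb₅ hb₃ hb₁ hb₀ hw₂ hw₄ h₂₃ h₂₁ h₄₁ h₄₀ h₂₅ h₂₀ h₄₅ h₄₃
  · exact labelledIndSubgraph_gP1'P5_of_path hB hb₀ hb₁ hb₃ hb₅ hw₂ hw₄ h₂₁ h₂₃ h₄₃ h₄₅ h₂₀ h₂₅ h₄₀ h₄₁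

end P1P5

theorem ncard_lt_two_mul_ncard_adj_bipComplementation {V : Type*} {G : SimpleGraph V}
    {B X : Set V} (hodd : Odd B.ncard)
    (hX : X = {w | w ∉ B ∧ 2 * ({b ∈ B | G.Adj w b}).ncard < B.ncard}) {w : V} (hw : w ∉ B) :
    B.ncard < 2 * ({b ∈ B | (bipComplementation G X B).Adj w b}).ncard := by
  have hfin : B.Finite := Set.finite_of_ncard_ne_zero hodd.pos.ne'
  have hsep : {b ∈ B | (bipComplementation G X B).Adj w b} =
      {b ∈ B | G.Adj w b ↔ w ∉ X} := by
    ext b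
    exact and_congr_right (bipComplementation_adj_iff hw)
  obtain ⟨k, hk⟩ := hodd
  by_cases hwX : w ∈ X
  · have hsmall : 2 * ({b ∈ B | G.Adj w b}).ncard < B.ncard := by
      rw [hX] at hwX
      exact hwX.2
    have hcompl : {b ∈ B | G.Adj w b ↔ w ∉ X} = B \ {b ∈ B | G.Adj w b} := by
      ext b
      simp [hwX]
    rw [hsep, hcompl, Set.ncard_sdiff (Set.sep_subset _ _) (hfin.subset (Set.sep_subset _ _))]
    omega
  · have hlarge : B.ncard ≤ 2 * ({b ∈ B | G.Adj w b}).ncard := by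
      rw [hX] at hwX
      simpa [hw] using hwX
    simp only [hwX, not_false_eq_true, iff_true] at hsep
    rw [hsep]
    omega

theorem stmt_17_general {V : Type*} (G : SimpleGraph V) (B : Set V)
    (hB : IsBWLabelling G B) (hodd : Odd B.ncard)
    (hfree : ¬ LabelledIndSubgraph gP1'P5 ({0, 1, 3, 5} : Set (Fin 6)) G B)
    (X : Set V) (hX : X = {w | w ∉ B ∧ 2 * ({b ∈ B | G.Adj w b}).ncard < B.ncard})
    (G₁ : SimpleGraph V) (hG₁ : G₁ = bipComplementation G X B) :
    ¬ LabelledIndSubgraph gP1'2P2 ({0, 1, 3} : Set (Fin 5)) G₁ B := by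
  subst hG₁
  rintro ⟨f, -, hadj, hcol⟩
  have hXB : Disjoint X B := Set.disjoint_left.2 fun w hw => by rw [hX] at hw; exact hw.1
  have hb₀ := (hcol 0).1 (by decide)
  have hb₁ := (hcol 1).1 (by decide)
  have hb₃ := (hcol 3).1 (by decide)
  have hw₂ := mt (hcol 2).2 (by decide)
  have hw₄ := mt (hcol 4).2 (by decide)
  obtain ⟨c, ⟨hc, h₂c⟩, -, h₄c⟩ := Set.inter_nonempty_of_ncard_lt_two_mul_ncard
    (Set.sep_subset _ _) (Set.sep_subset _ _) (Set.finite_of_ncard_ne_zero hodd.pos.ne')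
    (ncard_lt_two_mul_ncard_adj_bipComplementation hodd hX hw₂)
    (ncard_lt_two_mul_ncard_adj_bipComplementation hodd hX hw₄)
  have hP5 : LabelledIndSubgraph gP1'P5 {0, 1, 3, 5} (bipComplementation G X B) B :=
    labelledIndSubgraph_gP1'P5_of_path (hB.bipComplementation hXB) hb₀ hb₁ hc hb₃ hw₂ hw₄
      ((hadj 2 1).1 (by decide)) h₂c h₄c ((hadj 4 3).1 (by decide))
      (mt (hadj 2 0).2 (by decide)) (mt (hadj 2 3).2 (by decide))
      (mt (hadj 4 0).2 (by decide)) (mt (hadj 4 1).2 (by decide))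
  exact hfree (labelledIndSubgraph_gP1'P5_of_bipComplementation hB hP5)

/-- Let `G` be a bipartite graph with bipartition `(B, Bᶜ)` such that `|B|` is odd
and `(P_1+P_5)^b` is not a labelled induced subgraph of `(B, Bᶜ, E_G)`. Let `X` be
the set of white vertices adjacent to fewer than `|B|/2` vertices of `B`, and let
`G₁` be obtained from `G` by a bipartite complementation between `X` and `B`. Then
`(P_1+2P_2)^b` is not a labelled induced subgraph of `(B, Bᶜ, E_{G₁})`. -/
theorem stmt_17 {V : Type*} [Fintype V] (G : SimpleGraph V) (B : Set V)
    (hB : IsBWLabelling G B) (hodd : Odd B.ncard)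
    (hfree : ¬ LabelledIndSubgraph gP1'P5 ({0, 1, 3, 5} : Set (Fin 6)) G B)
    (X : Set V) (hX : X = {w | w ∉ B ∧ 2 * ({b ∈ B | G.Adj w b}).ncard < B.ncard})
    (G₁ : SimpleGraph V) (hG₁ : G₁ = bipComplementation G X B) :
    ¬ LabelledIndSubgraph gP1'2P2 ({0, 1, 3} : Set (Fin 5)) G₁ B :=
  stmt_17_general G B hB hodd hfree X hX G₁ hG₁
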